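/- arXiv:2508.13115 — 7 statements merged into one kernel-verified Lean document; each statement's English description precedes it below -/
import Mathlib

section
/- For every real k > 0, the function x ↦ B(x, k - x) (Euler beta function) is convex on the open interval (0, k). -/
open MeasureTheory

/-- The Euler beta function `B(x,y) = ∫₀¹ t^(x-1) (1-t)^(y-1) dt`. -/
noncomputable def betaFn (x y : ℝ) : ℝ :=
  ∫ t in (0:ℝ)..1, t ^ (x - 1) * (1 - t) ^ (y - 1)

/-!
For each `t ∈ (0,1)` the integrand `t^(x-1) (1-t)^(k-x-1) = t⁻¹ (1-t)^(k-1) (t/(1-t))^x` is a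
positive multiple of an exponential in `x`, hence convex in `x`; integrating in `t` preserves
convexity.
-/

open Set

theorem convexOn_integral {E α : Type*} [AddCommGroup E] [Module ℝ E] [MeasurableSpace α]
    {μ : Measure α} {s : Set E} {f : E → α → ℝ} (hs : Convex ℝ s)
    (hf_int : ∀ x ∈ s, Integrable (f x) μ) (hf_conv : ∀ᵐ t ∂μ, ConvexOn ℝ s (f · t)) :
    ConvexOn ℝ s fun x => ∫ t, f x t ∂μ := by
  refine ⟨hs, fun x hx y hy a b ha hb hab => ?_⟩
  calc ∫ t, f (a • x + b • y) t ∂μ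
      ≤ ∫ t, (a * f x t + b * f y t) ∂μ :=
        integral_mono_ae (hf_int _ (hs hx hy ha hb hab))
          (((hf_int x hx).const_mul a).add ((hf_int y hy).const_mul b))
          (hf_conv.mono fun t ht => ht.2 hx hy ha hb hab)
    _ = a • ∫ t, f x t ∂μ + b • ∫ t, f y t ∂μ := by
        rw [integral_add ((hf_int x hx).const_mul a) ((hf_int y hy).const_mul b),
          integral_const_mul, integral_const_mul, smul_eq_mul, smul_eq_mul]

theorem convexOn_rpow_sub_one_mul_rpow {p q : ℝ} (hp : 0 < p) (hq : 0 < q) (k : ℝ) :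
    ConvexOn ℝ univ fun x : ℝ => p ^ (x - 1) * q ^ (k - x - 1) := by
  have hconv := (convexOn_rpow_left (div_pos hp hq)).smul
    (by positivity : 0 ≤ p⁻¹ * q ^ (k - 1))
  refine hconv.congr fun x _ => ?_
  dsimp only
  rw [smul_eq_mul, Real.div_rpow hp.le hq.le, Real.rpow_sub_one hp.ne',
    show k - x - 1 = k - 1 - x by ring, Real.rpow_sub hq (k - 1) x]
  field_simp

theorem integrableOn_rpow_sub_one_mul_one_sub_rpow {x y : ℝ} (hx : 0 < x) (hy : 0 < y) :
    IntegrableOn (fun t : ℝ => t ^ (x - 1) * (1 - t) ^ (y - 1)) (Ioo 0 1) := by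
  have h := (Complex.betaIntegral_convergent (u := x) (v := y) (by simpa) (by simpa)).norm
  rw [intervalIntegrable_iff_integrableOn_Ioo_of_le zero_le_one] at h
  refine h.congr_fun (fun t ht => ?_) measurableSet_Ioo
  dsimp only
  rw [norm_mul, show (1 : ℂ) - t = ((1 - t : ℝ) : ℂ) by push_cast; ring,
    Complex.norm_cpow_eq_rpow_re_of_pos ht.1, Complex.norm_cpow_eq_rpow_re_of_pos (sub_pos.2 ht.2)]
  simp

theorem beta_convex_on_diagonal_general (k : ℝ) :
    ConvexOn ℝ (Set.Ioo (0:ℝ) k) (fun x => betaFn x (k - x)) := by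
  have hbeta : (fun x => betaFn x (k - x)) =
      fun x => ∫ t in Ioo 0 1, t ^ (x - 1) * (1 - t) ^ (k - x - 1) := by
    ext x
    rw [betaFn, intervalIntegral.integral_of_le zero_le_one, integral_Ioc_eq_integral_Ioo]
  rw [hbeta]
  refine convexOn_integral (convex_Ioo 0 k)
    (fun x hx => integrableOn_rpow_sub_one_mul_one_sub_rpow hx.1 (sub_pos.2 hx.2)) ?_
  filter_upwards [ae_restrict_mem measurableSet_Ioo] with t ht
  exact (convexOn_rpow_sub_one_mul_rpow ht.1 (sub_pos.2 ht.2) k).subset (subset_univ _)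
    (convex_Ioo 0 k)

theorem beta_convex_on_diagonal (k : ℝ) (hk : 0 < k) :
    ConvexOn ℝ (Set.Ioo (0:ℝ) k) (fun x => betaFn x (k - x)) :=
  beta_convex_on_diagonal_general k
end

section
/- For every real k > 0, the function x ↦ B(x, k - x) attains its minimum on (0, k) at x = k/2; that is, B(k/2, k/2) ≤ B(x, k - x) for all x ∈ (0, k). -/
open MeasureTheory

lemma betaIntegrable_left (a b : ℝ) (ha : 0 < a) :
    IntervalIntegrable (fun t : ℝ => t ^ (a - 1) * (1 - t) ^ (b - 1)) volume 0 (1/2) := by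
  apply IntervalIntegrable.mul_continuousOn
  · apply intervalIntegral.intervalIntegrable_rpow'
    linarith
  · apply continuousOn_of_forall_continuousAt
    intro x hx
    rw [Set.uIcc_of_le (by norm_num : (0:ℝ) ≤ 1/2)] at hx
    exact (Real.continuousAt_rpow_const _ _ (Or.inl (by linarith [hx.2]))).comp
      ((continuous_const.sub continuous_id).continuousAt)

lemma betaIntegrable (a b : ℝ) (ha : 0 < a) (hb : 0 < b) :
    IntervalIntegrable (fun t : ℝ => t ^ (a - 1) * (1 - t) ^ (b - 1)) volume 0 1 := by
  refine (betaIntegrable_left a b ha).trans ?_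
  rw [IntervalIntegrable.iff_comp_neg]
  convert ((betaIntegrable_left b a hb).comp_add_right 1).symm using 1
  · ext1 x
    rw [mul_comm]
    congr 2 <;> ring
  · norm_num
  · norm_num

lemma betaFn_symm (a b : ℝ) : betaFn a b = betaFn b a := by
  unfold betaFn
  have := intervalIntegral.integral_comp_sub_left (a := 0) (b := 1)
    (fun t : ℝ => t ^ (b - 1) * (1 - t) ^ (a - 1)) 1
  simp only [sub_self, sub_zero, sub_sub_cancel] at this
  rw [← this]
  congr 1
  ext t
  ring

theorem beta_min_at_half (k : ℝ) (hk : 0 < k) :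
    ∀ x ∈ Set.Ioo (0:ℝ) k, betaFn (k / 2) (k / 2) ≤ betaFn x (k - x) := by
  rintro x ⟨hx0, hxk⟩
  set g : ℝ → ℝ := fun t => t ^ (x - 1) * (1 - t) ^ (k - x - 1) with hgdef
  set g' : ℝ → ℝ := fun t => t ^ (k - x - 1) * (1 - t) ^ (x - 1) with hg'def
  have hIg : IntervalIntegrable g volume 0 1 := betaIntegrable x (k - x) hx0 (by linarith)
  have hIg' : IntervalIntegrable g' volume 0 1 := by
    have := betaIntegrable (k - x) x (by linarith) hx0
    simpa [hg'def, sub_sub, add_comm] using this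
  have hIL : IntervalIntegrable (fun t : ℝ => t ^ (k/2 - 1) * (1 - t) ^ (k/2 - 1)) volume 0 1 :=
    betaIntegrable (k/2) (k/2) (by linarith) (by linarith)
  -- pointwise inequality on Ioo 0 1
  have hpt : ∀ t ∈ Set.Ioo (0:ℝ) 1,
      t ^ (k/2 - 1) * (1 - t) ^ (k/2 - 1) ≤ (g t + g' t) / 2 := by
    rintro t ⟨ht0, ht1⟩
    have h1t : (0:ℝ) < 1 - t := by linarith
    set L := t ^ (k/2 - 1) * (1 - t) ^ (k/2 - 1) with hL
    have hLnn : 0 ≤ L := mul_nonneg (Real.rpow_nonneg ht0.le _) (Real.rpow_nonneg h1t.le _)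
    have hgnn : 0 ≤ g t := mul_nonneg (Real.rpow_nonneg ht0.le _) (Real.rpow_nonneg h1t.le _)
    have hg'nn : 0 ≤ g' t := mul_nonneg (Real.rpow_nonneg ht0.le _) (Real.rpow_nonneg h1t.le _)
    have e1 : t ^ (x - 1) * t ^ (k - x - 1) = t ^ (k/2 - 1) * t ^ (k/2 - 1) := by
      rw [← Real.rpow_add ht0, ← Real.rpow_add ht0]; ring_nf
    have e2 : (1 - t) ^ (k - x - 1) * (1 - t) ^ (x - 1)
        = (1 - t) ^ (k/2 - 1) * (1 - t) ^ (k/2 - 1) := by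
      rw [← Real.rpow_add h1t, ← Real.rpow_add h1t]; ring_nf
    have hprod : L * L = g t * g' t := by
      simp only [hgdef, hg'def, hL]
      nlinarith [e1, e2]
    nlinarith [sq_nonneg (g t - g' t), hprod, hLnn, hgnn, hg'nn]
  -- a.e. inequality on Icc 0 1
  have hae : (fun t : ℝ => t ^ (k/2 - 1) * (1 - t) ^ (k/2 - 1))
      ≤ᵐ[volume.restrict (Set.Icc (0:ℝ) 1)] fun t => (g t + g' t) / 2 := by
    have h0 : ∀ᵐ t : ℝ, t ≠ 0 := by
      rw [MeasureTheory.ae_iff]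
      simpa using measure_singleton (0:ℝ)
    have h1 : ∀ᵐ t : ℝ, t ≠ 1 := by
      rw [MeasureTheory.ae_iff]
      simpa using measure_singleton (1:ℝ)
    filter_upwards [ae_restrict_mem measurableSet_Icc, ae_restrict_of_ae h0,
      ae_restrict_of_ae h1] with t hmem ht0 ht1
    exact hpt t ⟨lt_of_le_of_ne hmem.1 (Ne.symm ht0), lt_of_le_of_ne hmem.2 ht1⟩
  have hmono := intervalIntegral.integral_mono_ae_restrict (μ := volume) (a := 0) (b := 1)
    (by norm_num) hIL ((hIg.add hIg').div_const 2) hae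
  have hsplit : (∫ t in (0:ℝ)..1, (g t + g' t) / 2)
      = ((∫ t in (0:ℝ)..1, g t) + ∫ t in (0:ℝ)..1, g' t) / 2 := by
    rw [intervalIntegral.integral_div, intervalIntegral.integral_add hIg hIg']
  have hgeq : (∫ t in (0:ℝ)..1, g t) = betaFn x (k - x) := rfl
  have hg'eq : (∫ t in (0:ℝ)..1, g' t) = betaFn x (k - x) := by
    rw [betaFn_symm]
    rfl
  have : betaFn (k/2) (k/2) ≤ ((∫ t in (0:ℝ)..1, g t) + ∫ t in (0:ℝ)..1, g' t) / 2 := by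
    rw [← hsplit]; exact hmono
  rw [hgeq, hg'eq] at this
  linarith [this]
end

section
/- For real k > 0, if k/2 ≤ α₂ < α₁ < k then B(α₁, k - α₁) > B(α₂, k - α₂), where B is the Euler beta function. -/
open MeasureTheory

/-!
For fixed `t ∈ (0, 1)` the integrand `x ↦ t^(x-1) (1-t)^(k-x-1)` of `B(x, k - x)` is the
exponential of an affine function of `x`, non-constant unless `t = 1/2`; hence it is strictly
convex for almost every `t`, and so is `f x = B(x, k - x)` on `(0, k)`. Since `f (k - x) = f x`,
for `k/2 ≤ y < x < k` the point `y` lies strictly between `k - x` and `x`, so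
`f y < max (f (k - x)) (f x) = f x`.
-/

open Set Real

theorem intervalIntegrable_betaFn_integrand {x y : ℝ} (hx : 0 < x) (hy : 0 < y) :
    IntervalIntegrable (fun t : ℝ => t ^ (x - 1) * (1 - t) ^ (y - 1)) volume 0 1 := by
  have hβ := Complex.betaIntegral_convergent (u := x) (v := y) (by simpa) (by simpa)
  refine hβ.norm.congr_uIoo fun t ht => ?_
  rw [uIoo_of_le zero_le_one] at ht
  have h1t : (1 - t : ℂ) = ((1 - t : ℝ) : ℂ) := by push_cast; rfl
  simp only [norm_mul, h1t, Complex.norm_cpow_eq_rpow_re_of_pos ht.1,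
    Complex.norm_cpow_eq_rpow_re_of_pos (sub_pos.2 ht.2), Complex.sub_re, Complex.ofReal_re,
    Complex.one_re]

theorem betaFn_comm (x y : ℝ) : betaFn x y = betaFn y x := by
  simpa [betaFn, mul_comm] using
    intervalIntegral.integral_comp_sub_left (a := 0) (b := 1)
      (fun t : ℝ => t ^ (y - 1) * (1 - t) ^ (x - 1)) 1

theorem strictConvexOn_rpow_mul_rpow {u v : ℝ} (hu : 0 < u) (hv : 0 < v) (huv : u ≠ v)
    (c d : ℝ) : StrictConvexOn ℝ univ fun x => u ^ (x - c) * v ^ (d - x) := by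
  have hlog : log u ≠ log v := fun h => huv (log_injOn_pos hu hv h)
  refine ⟨convex_univ, fun x _ y _ hxy a b ha hb hab => ?_⟩
  have hexp := strictConvexOn_exp.2 (mem_univ (log u * (x - c) + log v * (d - x)))
    (mem_univ (log u * (y - c) + log v * (d - y))) ?_ ha hb hab
  · simp only [smul_eq_mul, rpow_def_of_pos hu, rpow_def_of_pos hv, ← exp_add] at hexp ⊢
    convert hexp using 2
    linear_combination (c * log u - d * log v) * hab
  · contrapose! hxy
    have : (x - y) * (log u - log v) = 0 := by linear_combination hxy
    simpa [sub_eq_zero, hlog] using this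

theorem strictConvexOn_intervalIntegral {F : ℝ → ℝ → ℝ} {s : Set ℝ} {a b : ℝ}
    (hab : a < b) (hs : Convex ℝ s) (hF : ∀ x ∈ s, IntervalIntegrable (F x) volume a b)
    (hconv : ∀ᵐ t ∂volume.restrict (Ioc a b), StrictConvexOn ℝ s fun x => F x t) :
    StrictConvexOn ℝ s fun x => ∫ t in a..b, F x t := by
  refine ⟨hs, fun x hx y hy hxy μ ν hμ hν hμν => ?_⟩
  set z := μ * x + ν * y
  have hlt : ∀ᵐ t ∂volume.restrict (Ioc a b), F z t < μ * F x t + ν * F y t :=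
    hconv.mono fun t ht => ht.2 hx hy hxy hμ hν hμν
  have hpos : volume.restrict (Ioc a b) {t | F z t < μ * F x t + ν * F y t} ≠ 0 := by
    rw [measure_congr (ae_eq_univ.2 hlt), Measure.restrict_apply_univ, Real.volume_Ioc]
    simpa using hab
  have hFx := (hF x hx).const_mul μ
  have hFy := (hF y hy).const_mul ν
  simp only [smul_eq_mul]
  calc (∫ t in a..b, F z t)
      < ∫ t in a..b, μ * F x t + ν * F y t :=
        intervalIntegral.integral_lt_integral_of_ae_le_of_measure_setOfPred_lt_ne_zero hab.le
          (hF _ (hs hx hy hμ.le hν.le hμν)) (hFx.add hFy) (hlt.mono fun t ht => ht.le) hpos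
    _ = μ * (∫ t in a..b, F x t) + ν * ∫ t in a..b, F y t := by
        rw [intervalIntegral.integral_add hFx hFy, intervalIntegral.integral_const_mul,
          intervalIntegral.integral_const_mul]

theorem strictConvexOn_betaFn_sub (k : ℝ) :
    StrictConvexOn ℝ (Ioo 0 k) fun x => betaFn x (k - x) := by
  refine strictConvexOn_intervalIntegral zero_lt_one (convex_Ioo 0 k)
    (fun x hx => intervalIntegrable_betaFn_integrand hx.1 (sub_pos.2 hx.2)) ?_
  have hnull : ∀ᵐ t : ℝ ∂volume, t ∉ ({1, 1 / 2} : Set ℝ) :=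
    measure_eq_zero_iff_ae_notMem.1 ((toFinite _).measure_zero volume)
  filter_upwards [ae_restrict_mem measurableSet_Ioc, ae_restrict_of_ae hnull] with t ht hne
  obtain ⟨ht1, ht2⟩ : t ≠ 1 ∧ t ≠ 1 / 2 := by
    simpa only [mem_insert_iff, mem_singleton_iff, not_or] using hne
  have hsub : t ≠ 1 - t := fun h => ht2 (by linarith)
  have hconv := strictConvexOn_rpow_mul_rpow ht.1 (sub_pos.2 (ht.2.lt_of_ne ht1)) hsub 1 (k - 1)
  simpa only [sub_right_comm k] using hconv.subset (subset_univ _) (convex_Ioo 0 k)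

theorem StrictConvexOn.strictMonoOn_of_symm {f : ℝ → ℝ} {s : Set ℝ} {c : ℝ}
    (hf : StrictConvexOn ℝ s f) (hs : ∀ x ∈ s, c - x ∈ s)
    (hfc : ∀ x ∈ s, f (c - x) = f x) :
    StrictMonoOn f (s ∩ Ici (c / 2)) := by
  rintro y ⟨-, hcy : c / 2 ≤ y⟩ x ⟨hx, -⟩ hyx
  have hseg : y ∈ openSegment ℝ (c - x) x := by
    rw [openSegment_eq_Ioo (by linarith)]
    exact ⟨by linarith, hyx⟩
  simpa [hfc x hx] using hf.lt_on_openSegment (hs x hx) hx (by linarith) hseg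

theorem beta_strict_mono_right_of_half_general (k α₁ α₂ : ℝ)
    (h1 : k / 2 ≤ α₂) (h2 : α₂ < α₁) (h3 : α₁ < k) :
    betaFn α₁ (k - α₁) > betaFn α₂ (k - α₂) := by
  have hα₂ : α₂ ∈ Ioo 0 k ∩ Ici (k / 2) := ⟨⟨by linarith, by linarith⟩, h1⟩
  have hα₁ : α₁ ∈ Ioo 0 k ∩ Ici (k / 2) := ⟨⟨by linarith, h3⟩, h1.trans h2.le⟩
  refine (strictConvexOn_betaFn_sub k).strictMonoOn_of_symm
    (fun x hx => ⟨sub_pos.2 hx.2, sub_lt_self k hx.1⟩) (fun x _ => ?_) hα₂ hα₁ h2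
  rw [sub_sub_cancel, betaFn_comm]

theorem beta_strict_mono_right_of_half (k α₁ α₂ : ℝ) (hk : 0 < k)
    (h1 : k / 2 ≤ α₂) (h2 : α₂ < α₁) (h3 : α₁ < k) :
    betaFn α₁ (k - α₁) > betaFn α₂ (k - α₂) :=
  beta_strict_mono_right_of_half_general k α₁ α₂ h1 h2 h3
end

section
/- Let x > 0 be real and let a, b, c, d be positive integers with a ≥ b, c ≥ d, a < c, and a - b = c - d. Set r = d - b. Then Γ((a+1)x)·Γ((c+b+r)x) > Γ((c+1)x)·Γ((a+b+r)x). -/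
open Filter Topology Nat

private lemma prod_ineq_aux (u v k : ℝ) (hu : 0 < u) (huv : u < v) (hvk : u + v ≤ k) (n : ℕ) :
    (v * (k - v)) * ((∏ j ∈ Finset.range (n + 1), (u + (j : ℝ))) *
        ∏ j ∈ Finset.range (n + 1), (k - u + (j : ℝ))) ≤
      (u * (k - u)) * ((∏ j ∈ Finset.range (n + 1), (v + (j : ℝ))) *
        ∏ j ∈ Finset.range (n + 1), (k - v + (j : ℝ))) := by
  have hv : 0 < v := hu.trans huv
  have hkv : 0 < k - v := by linarith
  have hku : 0 < k - u := by linarith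
  induction n with
  | zero => simp; nlinarith [mul_pos hv hkv, mul_pos hu hku]
  | succ n ih =>
    rw [Finset.prod_range_succ (fun j : ℕ => u + (j : ℝ)) (n + 1),
      Finset.prod_range_succ (fun j : ℕ => k - u + (j : ℝ)) (n + 1),
      Finset.prod_range_succ (fun j : ℕ => v + (j : ℝ)) (n + 1),
      Finset.prod_range_succ (fun j : ℕ => k - v + (j : ℝ)) (n + 1)]
    have hfac : (u + ((n + 1 : ℕ) : ℝ)) * (k - u + ((n + 1 : ℕ) : ℝ)) ≤
        (v + ((n + 1 : ℕ) : ℝ)) * (k - v + ((n + 1 : ℕ) : ℝ)) := by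
      have hn : (0:ℝ) ≤ ((n + 1 : ℕ) : ℝ) := by positivity
      nlinarith [mul_nonneg (sub_pos.2 huv).le (by linarith : (0:ℝ) ≤ k - u - v)]
    have hfacpos : (0:ℝ) ≤ (u + ((n + 1 : ℕ) : ℝ)) * (k - u + ((n + 1 : ℕ) : ℝ)) := by positivity
    have hrhs : (0:ℝ) ≤ (u * (k - u)) * ((∏ j ∈ Finset.range (n + 1), (v + (j : ℝ))) *
        ∏ j ∈ Finset.range (n + 1), (k - v + (j : ℝ))) := by
      have h1 : (0:ℝ) < ∏ j ∈ Finset.range (n + 1), (v + (j : ℝ)) :=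
        Finset.prod_pos fun j _ => by positivity
      have h2 : (0:ℝ) < ∏ j ∈ Finset.range (n + 1), (k - v + (j : ℝ)) :=
        Finset.prod_pos fun j _ => by positivity
      positivity
    calc (v * (k - v)) * (((∏ j ∈ Finset.range (n + 1), (u + (j : ℝ))) * (u + ((n + 1 : ℕ) : ℝ))) *
            ((∏ j ∈ Finset.range (n + 1), (k - u + (j : ℝ))) * (k - u + ((n + 1 : ℕ) : ℝ))))
        = ((v * (k - v)) * ((∏ j ∈ Finset.range (n + 1), (u + (j : ℝ))) *
            ∏ j ∈ Finset.range (n + 1), (k - u + (j : ℝ)))) *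
            ((u + ((n + 1 : ℕ) : ℝ)) * (k - u + ((n + 1 : ℕ) : ℝ))) := by ring
      _ ≤ ((u * (k - u)) * ((∏ j ∈ Finset.range (n + 1), (v + (j : ℝ))) *
            ∏ j ∈ Finset.range (n + 1), (k - v + (j : ℝ)))) *
            ((v + ((n + 1 : ℕ) : ℝ)) * (k - v + ((n + 1 : ℕ) : ℝ))) :=
          mul_le_mul ih hfac hfacpos hrhs
      _ = (u * (k - u)) * (((∏ j ∈ Finset.range (n + 1), (v + (j : ℝ))) * (v + ((n + 1 : ℕ) : ℝ))) *
            ((∏ j ∈ Finset.range (n + 1), (k - v + (j : ℝ))) * (k - v + ((n + 1 : ℕ) : ℝ)))) := by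
          ring

private lemma gamma_aux (u v k : ℝ) (hu : 0 < u) (huv : u < v) (hvk : 2 * v ≤ k) :
    Real.Gamma v * Real.Gamma (k - v) < Real.Gamma u * Real.Gamma (k - u) := by
  have hv : 0 < v := hu.trans huv
  have hkv : 0 < k - v := by linarith
  have hku : 0 < k - u := by linarith
  set ρ : ℝ := (v * (k - v)) / (u * (k - u)) with hρdef
  have huku : 0 < u * (k - u) := mul_pos hu hku
  have hρ : 1 < ρ := by
    rw [hρdef, lt_div_iff₀ huku]
    nlinarith [mul_pos (sub_pos.2 huv) (by linarith : (0:ℝ) < k - u - v)]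
  have hkey : ∀ n : ℕ, 1 ≤ n →
      ρ * (Real.GammaSeq v n * Real.GammaSeq (k - v) n) ≤
        Real.GammaSeq u n * Real.GammaSeq (k - u) n := by
    intro n hn
    have hnpos : (0:ℝ) < n := by exact_mod_cast hn
    have hApos : ∀ y : ℝ, 0 < y → 0 < ∏ j ∈ Finset.range (n + 1), (y + (j : ℝ)) :=
      fun y hy => Finset.prod_pos fun j _ => by positivity
    have hgs : ∀ y z : ℝ, 0 < y → 0 < z → Real.GammaSeq y n * Real.GammaSeq z n =
        ((n : ℝ) ^ (y + z) * ((n ! : ℝ)) ^ 2) /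
          ((∏ j ∈ Finset.range (n + 1), (y + (j : ℝ))) *
            ∏ j ∈ Finset.range (n + 1), (z + (j : ℝ))) := by
      intro y z hy hz
      have h1 := (hApos y hy).ne'
      have h2 := (hApos z hz).ne'
      rw [Real.GammaSeq, Real.GammaSeq, Real.rpow_add hnpos]
      field_simp
    rw [hgs v (k - v) hv hkv, hgs u (k - u) hu hku,
      show v + (k - v) = u + (k - u) by ring]
    set N : ℝ := (n : ℝ) ^ (u + (k - u)) * ((n ! : ℝ)) ^ 2 with hN
    have hNpos : 0 < N := by
      have : (0:ℝ) < (n ! : ℝ) := by exact_mod_cast n.factorial_pos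
      positivity
    have hAu := hApos u hu
    have hAv := hApos v hv
    have hAku := hApos (k - u) hku
    have hAkv := hApos (k - v) hkv
    rw [hρdef, div_mul_div_comm (v * (k - v)) (u * (k - u)) N
        ((∏ j ∈ Finset.range (n + 1), (v + (j : ℝ))) *
          ∏ j ∈ Finset.range (n + 1), (k - v + (j : ℝ))),
      div_le_div_iff₀ (mul_pos huku (mul_pos hAv hAkv)) (mul_pos hAu hAku)]
    have key := prod_ineq_aux u v k hu huv (by linarith) n
    calc v * (k - v) * N * ((∏ j ∈ Finset.range (n + 1), (u + (j : ℝ))) *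
            ∏ j ∈ Finset.range (n + 1), (k - u + (j : ℝ)))
        = N * ((v * (k - v)) * ((∏ j ∈ Finset.range (n + 1), (u + (j : ℝ))) *
            ∏ j ∈ Finset.range (n + 1), (k - u + (j : ℝ)))) := by ring
      _ ≤ N * ((u * (k - u)) * ((∏ j ∈ Finset.range (n + 1), (v + (j : ℝ))) *
            ∏ j ∈ Finset.range (n + 1), (k - v + (j : ℝ)))) :=
          mul_le_mul_of_nonneg_left key hNpos.le
      _ = N * (u * (k - u) * ((∏ j ∈ Finset.range (n + 1), (v + (j : ℝ))) *
            ∏ j ∈ Finset.range (n + 1), (k - v + (j : ℝ)))) := by ring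
  have hlim1 : Tendsto (fun n => ρ * (Real.GammaSeq v n * Real.GammaSeq (k - v) n)) atTop
      (𝓝 (ρ * (Real.Gamma v * Real.Gamma (k - v)))) :=
    tendsto_const_nhds.mul
      ((Real.GammaSeq_tendsto_Gamma v).mul (Real.GammaSeq_tendsto_Gamma (k - v)))
  have hlim2 : Tendsto (fun n => Real.GammaSeq u n * Real.GammaSeq (k - u) n) atTop
      (𝓝 (Real.Gamma u * Real.Gamma (k - u))) :=
    (Real.GammaSeq_tendsto_Gamma u).mul (Real.GammaSeq_tendsto_Gamma (k - u))
  have hle : ρ * (Real.Gamma v * Real.Gamma (k - v)) ≤ Real.Gamma u * Real.Gamma (k - u) :=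
    le_of_tendsto_of_tendsto hlim1 hlim2 (eventually_atTop.2 ⟨1, hkey⟩)
  have hΓpos : 0 < Real.Gamma v * Real.Gamma (k - v) :=
    mul_pos (Real.Gamma_pos_of_pos hv) (Real.Gamma_pos_of_pos hkv)
  calc Real.Gamma v * Real.Gamma (k - v)
      < ρ * (Real.Gamma v * Real.Gamma (k - v)) := (lt_mul_iff_one_lt_left hΓpos).2 hρ
    _ ≤ Real.Gamma u * Real.Gamma (k - u) := hle

theorem gamma_product_ineq (x : ℝ) (hx : 0 < x) (a b c d r : ℕ)
    (ha : 0 < a) (hb : 0 < b) (hc : 0 < c) (hd : 0 < d)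
    (hab : b ≤ a) (hcd : d ≤ c) (hac : a < c)
    (hdiff : a - b = c - d) (hr : r = d - b) :
    Real.Gamma (((a : ℝ) + 1) * x) * Real.Gamma (((c : ℝ) + b + r) * x) >
      Real.Gamma (((c : ℝ) + 1) * x) * Real.Gamma (((a : ℝ) + b + r) * x) := by
  have habd : a + d = b + c := by omega
  have hrb : r + b = d := by omega
  have hd' : (d : ℝ) = (r : ℝ) + (b : ℝ) := by exact_mod_cast hrb.symm
  set k : ℝ := ((a : ℝ) + c + d + 1) * x with hk
  have e1 : ((c : ℝ) + b + r) * x = k - ((a : ℝ) + 1) * x := by rw [hk, hd']; ring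
  have e2 : ((a : ℝ) + b + r) * x = k - ((c : ℝ) + 1) * x := by rw [hk, hd']; ring
  rw [e1, e2]
  refine gamma_aux _ _ _ (by positivity) ?_ ?_
  · have : (a : ℝ) < c := by exact_mod_cast hac
    nlinarith
  · have h : (c : ℝ) + 1 ≤ (a : ℝ) + d := by exact_mod_cast (by omega : c + 1 ≤ a + d)
    rw [hk]; nlinarith
end

section
/- In the Fock space F²₂, for every f(z) = Σ_{s=0}^n a_s z^{s+τ} conj(z)^s with τ ≥ 0, the Berezin transform B₂f again has this form (with the same τ and degree ≤ n), and the map B₂ restricted to H_{n,τ} = {Σ_{s=0}^n a_s z^{s+τ} conj(z)^s} is a linear bijection of H_{n,τ} onto itself. -/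
open MeasureTheory

/-- The Berezin transform on the Fock space `F²₂`, with `dA = r dr dθ/(2π)`. -/
noncomputable def berezin2 (f : ℂ → ℂ) (z : ℂ) : ℂ :=
  2 * ((2 * Real.pi)⁻¹ : ℝ) *
    ∫ ξ : ℂ, f (z + ξ) * (Real.exp (-‖ξ‖ ^ 2) : ℂ)

/-- The space `H_{n,τ}` of polynomials `Σ_{s=0}^n a_s z^{s+τ} conj(z)^s`. -/
def Hspace (n τ : ℕ) : Set (ℂ → ℂ) :=
  {f | ∃ a : ℕ → ℂ, ∀ z, f z =
    ∑ s ∈ Finset.range (n + 1), a s * z ^ (s + τ) * (starRingEnd ℂ z) ^ s}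

/-!
Expanding `(z + ξ)^(s+τ) conj(z + ξ)^s` binomially and integrating against the Gaussian, rotation
invariance kills every moment `∫ ξ^j conj(ξ)^k e^{-|ξ|²}` with `j ≠ k`, so
`B₂(z^(s+τ) conj(z)^s) = Σ_{r ≤ s} c_{rs} z^(r+τ) conj(z)^r` with `c_{ss} = π⁻¹ ∫ e^{-|ξ|²} = 1`.
Hence on coefficient vectors `B₂` acts by a unitriangular, so invertible, matrix. The functions
`z^(s+τ) conj(z)^s` are linearly independent (on the real axis they are the distinct powers
`x^(2s+τ)`), so coefficient vectors parametrize `H_{n,τ}` faithfully and `B₂` is a bijection of it.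
-/

open Finset ComplexConjugate

noncomputable section

lemma integrable_norm_pow_mul_exp_neg_sq {E : Type*} [NormedAddCommGroup E] [NormedSpace ℝ E]
    [FiniteDimensional ℝ E] [Nontrivial E] [MeasurableSpace E] [BorelSpace E]
    (μ : Measure E) [μ.IsAddHaarMeasure] (m : ℕ) :
    Integrable (fun x : E => ‖x‖ ^ m * Real.exp (-‖x‖ ^ 2)) μ := by
  rw [integrable_fun_norm_addHaar μ (f := fun y => y ^ m * Real.exp (-y ^ 2))]
  have := integrableOn_rpow_mul_exp_neg_mul_sq one_pos
    (s := ((Module.finrank ℝ E - 1 + m : ℕ) : ℝ)) (neg_one_lt_zero.trans_le (Nat.cast_nonneg _))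
  refine this.congr_fun (fun y _ => ?_) measurableSet_Ioi
  dsimp only
  rw [Real.rpow_natCast, pow_add, smul_eq_mul]
  ring_nf

def monomialConj (a b : ℕ) (z : ℂ) : ℂ := z ^ a * conj z ^ b

lemma continuous_monomialConj (a b : ℕ) : Continuous (monomialConj a b) := by
  unfold monomialConj; fun_prop

lemma norm_monomialConj (a b : ℕ) (z : ℂ) : ‖monomialConj a b z‖ = ‖z‖ ^ (a + b) := by
  simp [monomialConj, pow_add]

lemma integrable_monomialConj_mul_gaussian (a b : ℕ) :
    Integrable fun ξ => monomialConj a b ξ * Real.exp (-‖ξ‖ ^ 2) := by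
  refine (integrable_norm_pow_mul_exp_neg_sq volume (a + b)).mono'
    ((continuous_monomialConj a b).mul (by fun_prop)).aestronglyMeasurable (.of_forall fun ξ => ?_)
  rw [norm_mul, norm_monomialConj, Complex.norm_real, Real.norm_of_nonneg (Real.exp_pos _).le]

def gaussianMoment (j k : ℕ) : ℂ := ∫ ξ : ℂ, monomialConj j k ξ * Real.exp (-‖ξ‖ ^ 2)

lemma monomialConj_mul (a b : ℕ) (u z : ℂ) :
    monomialConj a b (u * z) = monomialConj a b u * monomialConj a b z := by
  simp only [monomialConj, map_mul]; ring

lemma gaussianMoment_eq_monomialConj_mul (j k : ℕ) (u : Circle) :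
    gaussianMoment j k = monomialConj j k u * gaussianMoment j k := by
  rw [gaussianMoment, ← integral_const_mul, ← integral_comp (rotation u)]
  simp_rw [rotation_apply, monomialConj_mul, norm_mul, Circle.norm_coe, one_mul, mul_assoc]

lemma gaussianMoment_eq_zero_of_ne {j k : ℕ} (h : j ≠ k) : gaussianMoment j k = 0 := by
  have hjk : (j - k : ℂ) ≠ 0 := sub_ne_zero.2 (Nat.cast_injective.ne h)
  have hu : monomialConj j k (Circle.exp (Real.pi / (j - k))) = -1 := by
    rw [Circle.coe_exp, monomialConj, ← Complex.exp_conj, ← Complex.exp_nat_mul,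
      ← Complex.exp_nat_mul, ← Complex.exp_add, ← Complex.exp_pi_mul_I]
    congr 1
    simp only [map_mul, Complex.conj_ofReal, Complex.conj_I]
    push_cast
    field_simp
    ring
  have := gaussianMoment_eq_monomialConj_mul j k (Circle.exp (Real.pi / (j - k)))
  rw [hu] at this
  linear_combination this / 2

lemma gaussianMoment_zero_zero : gaussianMoment 0 0 = Real.pi := by
  have := GaussianFourier.integral_rexp_neg_mul_sq_norm (V := ℂ) one_pos
  norm_num [Complex.finrank_real_complex] at this
  simp only [gaussianMoment, monomialConj, pow_zero, mul_one, one_mul]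
  rw [integral_complex_ofReal, this]

lemma monomialConj_add (a b : ℕ) (z ξ : ℂ) :
    monomialConj a b (z + ξ) = ∑ m ∈ range (a + 1), ∑ l ∈ range (b + 1),
      a.choose m * b.choose l * monomialConj m l z * monomialConj (a - m) (b - l) ξ := by
  rw [monomialConj, map_add, add_pow, add_pow, sum_mul_sum]
  refine sum_congr rfl fun m _ => sum_congr rfl fun l _ => ?_
  simp only [monomialConj]
  ring

lemma integrable_const_mul_monomialConj_mul_gaussian (c : ℂ) (a b : ℕ) :
    Integrable fun ξ => c * monomialConj a b ξ * Real.exp (-‖ξ‖ ^ 2) := by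
  simpa only [mul_assoc] using (integrable_monomialConj_mul_gaussian a b).const_mul c

lemma integrable_monomialConj_add_mul_gaussian (a b : ℕ) (z : ℂ) :
    Integrable fun ξ => monomialConj a b (z + ξ) * Real.exp (-‖ξ‖ ^ 2) := by
  simp_rw [monomialConj_add, sum_mul]
  exact integrable_finsetSum _ fun m _ => integrable_finsetSum _ fun l _ =>
    integrable_const_mul_monomialConj_mul_gaussian _ _ _

lemma berezin2_apply (f : ℂ → ℂ) (z : ℂ) :
    berezin2 f z = (Real.pi : ℂ)⁻¹ * ∫ ξ : ℂ, f (z + ξ) * Real.exp (-‖ξ‖ ^ 2) := by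
  rw [berezin2]
  congr 1
  push_cast
  field_simp

lemma berezin2_sum_smul {ι : Type*} (t : Finset ι) (c : ι → ℂ) (f : ι → ℂ → ℂ) (z : ℂ)
    (hf : ∀ i ∈ t, Integrable fun ξ => f i (z + ξ) * Real.exp (-‖ξ‖ ^ 2)) :
    berezin2 (∑ i ∈ t, c i • f i) z = ∑ i ∈ t, c i * berezin2 (f i) z := by
  simp only [berezin2_apply, Finset.sum_apply, Pi.smul_apply, smul_eq_mul, sum_mul, mul_assoc]
  rw [integral_finsetSum _ fun i hi => (hf i hi).const_mul _, mul_sum]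
  refine sum_congr rfl fun i _ => ?_
  rw [integral_const_mul]
  ring

lemma berezin2_monomialConj (a b : ℕ) (z : ℂ) :
    berezin2 (monomialConj a b) z = ∑ m ∈ range (a + 1), ∑ l ∈ range (b + 1),
      (Real.pi : ℂ)⁻¹ * a.choose m * b.choose l * gaussianMoment (a - m) (b - l) *
        monomialConj m l z := by
  simp_rw [berezin2_apply, monomialConj_add, sum_mul]
  rw [integral_finsetSum _ fun m _ => integrable_finsetSum _ fun l _ =>
    integrable_const_mul_monomialConj_mul_gaussian _ _ _, mul_sum]
  refine sum_congr rfl fun m _ => ?_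
  rw [integral_finsetSum _ fun l _ => integrable_const_mul_monomialConj_mul_gaussian _ _ _,
    mul_sum]
  refine sum_congr rfl fun l _ => ?_
  simp only [mul_assoc, integral_const_mul, gaussianMoment]
  ring

def berezinCoeff (τ r s : ℕ) : ℂ :=
  (Real.pi : ℂ)⁻¹ * (s + τ).choose (r + τ) * s.choose r * gaussianMoment (s - r) (s - r)

lemma berezin2_monomialConj_add_self (τ s : ℕ) (z : ℂ) :
    berezin2 (monomialConj (s + τ) s) z =
      ∑ r ∈ range (s + 1), berezinCoeff τ r s * monomialConj (r + τ) r z := by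
  rw [berezin2_monomialConj, sum_comm]
  refine sum_congr rfl fun r hr => ?_
  rw [mem_range] at hr
  rw [sum_eq_single_of_mem (r + τ) (mem_range.2 (by omega))]
  · rw [berezinCoeff, Nat.add_sub_add_right]
  · intro m hm hne
    rw [mem_range] at hm
    rw [gaussianMoment_eq_zero_of_ne (by omega), mul_zero, zero_mul]

lemma berezinCoeff_self (τ s : ℕ) : berezinCoeff τ s s = 1 := by
  have : (Real.pi : ℂ) ≠ 0 := Complex.ofReal_ne_zero.2 Real.pi_ne_zero
  simp [berezinCoeff, gaussianMoment_zero_zero, this]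

lemma berezinCoeff_eq_zero_of_lt (τ : ℕ) {r s : ℕ} (h : s < r) : berezinCoeff τ r s = 0 := by
  simp [berezinCoeff, Nat.choose_eq_zero_of_lt h]

def Hmonomial (n τ : ℕ) (s : Fin (n + 1)) : ℂ → ℂ := monomialConj (s + τ) s

def berezinMatrix (n τ : ℕ) : Matrix (Fin (n + 1)) (Fin (n + 1)) ℂ :=
  Matrix.of fun r s => berezinCoeff τ r s

lemma berezin2_Hmonomial (n τ : ℕ) (s : Fin (n + 1)) (z : ℂ) :
    berezin2 (Hmonomial n τ s) z = ∑ r, berezinMatrix n τ r s * Hmonomial n τ r z := by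
  simp only [Hmonomial, berezinMatrix, Matrix.of_apply]
  rw [berezin2_monomialConj_add_self,
    Fin.sum_univ_eq_sum_range (fun r => berezinCoeff τ r s * monomialConj (r + τ) r z)]
  refine sum_subset (range_subset_range.2 (by omega)) fun r _ hr => ?_
  rw [berezinCoeff_eq_zero_of_lt τ (by simpa using hr), zero_mul]

lemma semiconj_berezin2 (n τ : ℕ) :
    Function.Semiconj (Fintype.linearCombination ℂ (Hmonomial n τ))
      (berezinMatrix n τ).mulVec berezin2 := by
  intro c
  funext z
  rw [Fintype.linearCombination_apply, Fintype.linearCombination_apply,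
    berezin2_sum_smul univ c (Hmonomial n τ) z
      fun s _ => integrable_monomialConj_add_mul_gaussian _ _ z]
  simp only [Finset.sum_apply, Pi.smul_apply, smul_eq_mul, berezin2_Hmonomial, Matrix.mulVec,
    dotProduct, sum_mul, mul_sum]
  rw [sum_comm]
  exact sum_congr rfl fun s _ => sum_congr rfl fun r _ => by ring

lemma det_berezinMatrix (n τ : ℕ) : (berezinMatrix n τ).det = 1 := by
  have h : (berezinMatrix n τ).IsUpperTriangular := fun r s h => berezinCoeff_eq_zero_of_lt τ h
  rw [Matrix.det_of_isUpperTriangular h]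
  exact prod_eq_one fun s _ => berezinCoeff_self τ s

lemma bijective_mulVec_berezinMatrix (n τ : ℕ) :
    Function.Bijective (berezinMatrix n τ).mulVec := by
  have h : IsUnit (berezinMatrix n τ) := by
    rw [Matrix.isUnit_iff_isUnit_det, det_berezinMatrix]
    exact isUnit_one
  exact ⟨Matrix.mulVec_injective_iff_isUnit.2 h, Matrix.mulVec_surjective_iff_isUnit.2 h⟩

lemma linearIndependent_ofReal_pow :
    LinearIndependent ℂ fun k : ℕ => fun x : ℝ => (x : ℂ) ^ k := by
  let ev : Polynomial ℂ →ₗ[ℂ] ℝ → ℂ := LinearMap.pi fun x : ℝ => Polynomial.leval (x : ℂ)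
  have hev : LinearMap.ker ev = ⊥ := by
    refine LinearMap.ker_eq_bot'.2 fun p hp => Polynomial.eq_zero_of_infinite_isRoot p ?_
    refine (Set.infinite_range_of_injective Complex.ofReal_injective).mono ?_
    rintro _ ⟨x, rfl⟩
    exact congr_fun hp x
  have hmon : (fun k : ℕ => fun x : ℝ => (x : ℂ) ^ k) = ev ∘ Polynomial.basisMonomials ℂ := by
    funext k x
    simp [ev]
  rw [hmon]
  exact (Polynomial.basisMonomials ℂ).linearIndependent.map' ev hev

lemma linearIndependent_monomialConj (τ : ℕ) :
    LinearIndependent ℂ fun s : ℕ => monomialConj (s + τ) s := by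
  refine LinearIndependent.of_comp (LinearMap.funLeft ℂ ℂ Complex.ofReal) ?_
  convert linearIndependent_ofReal_pow.comp (fun s => 2 * s + τ)
    fun a b h => by dsimp only at h; omega
  funext s x
  simp only [Function.comp_apply, LinearMap.funLeft_apply, monomialConj, Complex.conj_ofReal]
  ring

lemma linearIndependent_Hmonomial (n τ : ℕ) : LinearIndependent ℂ (Hmonomial n τ) :=
  (linearIndependent_monomialConj τ).comp _ Fin.val_injective

lemma Hspace_eq_range (n τ : ℕ) :
    Hspace n τ = Set.range (Fintype.linearCombination ℂ (Hmonomial n τ)) := by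
  ext f
  simp only [Hspace, Set.mem_ofPred_eq, Set.mem_range, Fintype.linearCombination_apply,
    funext_iff, Finset.sum_apply, Pi.smul_apply, smul_eq_mul, Hmonomial, monomialConj, ← mul_assoc]
  constructor
  · rintro ⟨a, ha⟩
    refine ⟨fun s => a s, fun z => ?_⟩
    rw [ha, Fin.sum_univ_eq_sum_range (fun s => a s * z ^ (s + τ) * conj z ^ s)]
  · rintro ⟨c, hc⟩
    let a : ℕ → ℂ := fun s => c (Fin.ofNat (n + 1) s)
    refine ⟨a, fun z => ?_⟩
    rw [← hc, ← Fin.sum_univ_eq_sum_range (fun s => a s * z ^ (s + τ) * conj z ^ s)]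
    simp only [a, Fin.ofNat_eq_cast, Fin.cast_val_eq_self]

end

theorem berezin2_bijOn (n τ : ℕ) :
    (∀ f ∈ Hspace n τ, berezin2 f ∈ Hspace n τ) ∧
    Set.BijOn berezin2 (Hspace n τ) (Hspace n τ) := by
  have hbij : Set.BijOn berezin2 (Hspace n τ) (Hspace n τ) := by
    rw [Hspace_eq_range]
    exact (semiconj_berezin2 n τ).bijOn_range (bijective_mulVec_berezinMatrix n τ)
      (linearIndependent_Hmonomial n τ).fintypeLinearCombination_injective
  exact ⟨hbij.mapsTo, hbij⟩
end

section
/- Let f be a polynomial in z and conj(z) such that B₂f = f, where B₂ is the Berezin transform of the Fock space F²₂. Then f is harmonic. -/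
/-!
Expanding `f (z + ξ)` binomially and using that the Gaussian moments `∫ ξ^a ξ̄^b e^{-|ξ|²}`
vanish for `a ≠ b` (rotation invariance), the transform acts on monomials by
`B₂ (z^j z̄^k) = ∑_a a! C(j,a) C(k,a) z^{j-a} z̄^{k-a}`. The functions `z^p z̄^q` are linearly
independent, since `(x, y) ↦ (x + iy, x - iy)` is an invertible substitution and a polynomial
vanishing on `ℝ²` is zero. Comparing coefficients of `z^{j-1} z̄^{k-1}` in `B₂f - f = 0` gives
`j k c_{jk} + ∑_{a ≥ 2} (⋯) c_{j-1+a, k-1+a} = 0`, so the mixed coefficients `c_{jk}`, `j, k ≥ 1`,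
vanish by downward induction on `j`, and `f` is a polynomial in `z` plus one in `z̄`.
-/

open MeasureTheory

open Real Finset ComplexConjugate
open scoped Nat

lemma add_pow_eq_sum_range_of_le {R : Type*} [CommSemiring R] (x y : R) {j n : ℕ} (h : j ≤ n) :
    (x + y) ^ j = ∑ a ∈ range (n + 1), x ^ a * y ^ (j - a) * j.choose a := by
  rw [add_pow]
  refine sum_subset (range_subset_range.2 (by omega)) fun a _ ha => ?_
  rw [Nat.choose_eq_zero_of_lt (by simpa using ha), Nat.cast_zero, mul_zero]

lemma integral_norm_pow_mul_exp_neg_sq (n : ℕ) :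
    ∫ ξ : ℂ, ‖ξ‖ ^ n * rexp (-‖ξ‖ ^ 2) = π * Gamma (n / 2 + 1) := by
  have h := Complex.integral_rpow_mul_exp_neg_rpow (p := 2) (q := n) one_le_two
    (by linarith [(Nat.cast_nonneg n : (0 : ℝ) ≤ n)])
  simp only [rpow_two, rpow_natCast] at h
  rw [h, add_div, div_self two_ne_zero]
  ring

lemma integrable_norm_pow_mul_exp_neg_sq_s13 (n : ℕ) :
    Integrable fun ξ : ℂ => ‖ξ‖ ^ n * rexp (-‖ξ‖ ^ 2) := by
  -- the Bochner integral of a non-integrable function is `0`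
  refine Integrable.of_integral_ne_zero ?_
  rw [integral_norm_pow_mul_exp_neg_sq]
  exact (mul_pos pi_pos (Gamma_pos_of_pos (by positivity))).ne'

lemma integrable_pow_mul_conj_pow_mul_exp_neg_sq (a b : ℕ) :
    Integrable fun ξ : ℂ => ξ ^ a * conj ξ ^ b * (rexp (-‖ξ‖ ^ 2) : ℂ) := by
  refine (integrable_norm_pow_mul_exp_neg_sq_s13 (a + b)).mono' (by fun_prop) ?_
  filter_upwards with ξ
  simp only [norm_mul, norm_pow, Complex.norm_conj, Complex.norm_real, pow_add,
    norm_of_nonneg (exp_pos _).le, le_refl]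

lemma integral_comp_circle_mul (α : Circle) (g : ℂ → ℂ) :
    ∫ ξ : ℂ, g (α * ξ) = ∫ ξ : ℂ, g ξ :=
  (rotation α).measurePreserving.integral_comp (rotation α).toHomeomorph.measurableEmbedding g

lemma exists_circle_pow_mul_conj_pow_eq_neg_one {a b : ℕ} (hab : a ≠ b) :
    ∃ α : Circle, (α : ℂ) ^ a * conj (α : ℂ) ^ b = -1 := by
  have hab' : (a : ℂ) - b ≠ 0 := sub_ne_zero.2 (Nat.cast_injective.ne hab)
  refine ⟨Circle.exp (π / (a - b)), ?_⟩
  rw [Circle.coe_exp, ← Complex.exp_conj, ← Complex.exp_nat_mul, ← Complex.exp_nat_mul,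
    ← Complex.exp_add, ← Complex.exp_pi_mul_I, map_mul, Complex.conj_ofReal, Complex.conj_I]
  congr 1
  push_cast
  field_simp
  ring

lemma integral_pow_mul_conj_pow_mul_exp_neg_sq (a b : ℕ) :
    ∫ ξ : ℂ, ξ ^ a * conj ξ ^ b * (rexp (-‖ξ‖ ^ 2) : ℂ) = if a = b then (π : ℂ) * a ! else 0 := by
  split_ifs with hab
  · subst hab
    have h := integral_norm_pow_mul_exp_neg_sq (2 * a)
    push_cast at h
    rw [mul_div_cancel_left₀ _ two_ne_zero, Gamma_nat_eq_factorial] at h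
    have hξ (ξ : ℂ) : ξ ^ a * conj ξ ^ a * (rexp (-‖ξ‖ ^ 2) : ℂ)
        = ((‖ξ‖ ^ (2 * a) * rexp (-‖ξ‖ ^ 2) : ℝ) : ℂ) := by
      rw [← mul_pow, Complex.mul_conj, Complex.normSq_eq_norm_sq, pow_mul]
      push_cast
      ring
    simp_rw [hξ, integral_complex_ofReal, h]
    norm_cast
  · -- rotating by a suitable `α` changes the sign of the integrand but not the integral
    obtain ⟨α, hα⟩ := exists_circle_pow_mul_conj_pow_eq_neg_one hab
    have h := integral_comp_circle_mul α fun ξ => ξ ^ a * conj ξ ^ b * (rexp (-‖ξ‖ ^ 2) : ℂ)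
    have hξ (ξ : ℂ) : (α * ξ) ^ a * conj (α * ξ) ^ b * (rexp (-‖α * ξ‖ ^ 2) : ℂ)
        = -(ξ ^ a * conj ξ ^ b * (rexp (-‖ξ‖ ^ 2) : ℂ)) := by
      rw [norm_mul, Circle.norm_coe, one_mul, map_mul, mul_pow, mul_pow]
      linear_combination (ξ ^ a * conj ξ ^ b * (rexp (-‖ξ‖ ^ 2) : ℂ)) * hα
    simp only [hξ, integral_neg] at h
    linear_combination h / (-2)

lemma add_pow_mul_conj_add_pow_mul {j k n : ℕ} (hj : j ≤ n) (hk : k ≤ n) (z ξ w : ℂ) :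
    (z + ξ) ^ j * conj (z + ξ) ^ k * w = ∑ a ∈ range (n + 1), ∑ b ∈ range (n + 1),
      (j.choose a * k.choose b * z ^ (j - a) * conj z ^ (k - b)) * (ξ ^ a * conj ξ ^ b * w) := by
  rw [add_comm z, map_add, add_pow_eq_sum_range_of_le _ _ hj, add_pow_eq_sum_range_of_le _ _ hk,
    sum_mul_sum, sum_mul]
  refine sum_congr rfl fun a _ => ?_
  rw [sum_mul]
  refine sum_congr rfl fun b _ => ?_
  ring

lemma integrable_add_pow_mul_conj_add_pow_mul_exp_neg_sq (j k : ℕ) (z : ℂ) :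
    Integrable fun ξ : ℂ => (z + ξ) ^ j * conj (z + ξ) ^ k * (rexp (-‖ξ‖ ^ 2) : ℂ) := by
  simp_rw [add_pow_mul_conj_add_pow_mul (le_max_left j k) (le_max_right j k)]
  exact integrable_finsetSum _ fun a _ => integrable_finsetSum _ fun b _ =>
    (integrable_pow_mul_conj_pow_mul_exp_neg_sq a b).const_mul _

lemma integral_add_pow_mul_conj_add_pow_mul_exp_neg_sq {j k n : ℕ} (hj : j ≤ n) (hk : k ≤ n)
    (z : ℂ) : ∫ ξ : ℂ, (z + ξ) ^ j * conj (z + ξ) ^ k * (rexp (-‖ξ‖ ^ 2) : ℂ) =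
      π * ∑ a ∈ range (n + 1), j.choose a * k.choose a * a ! * z ^ (j - a) * conj z ^ (k - a) := by
  simp_rw [add_pow_mul_conj_add_pow_mul hj hk]
  rw [integral_finsetSum _ fun a _ => integrable_finsetSum _ fun b _ =>
    (integrable_pow_mul_conj_pow_mul_exp_neg_sq a b).const_mul _, mul_sum]
  refine sum_congr rfl fun a ha => ?_
  rw [integral_finsetSum _ fun b _ => (integrable_pow_mul_conj_pow_mul_exp_neg_sq a b).const_mul _]
  simp_rw [integral_const_mul, integral_pow_mul_conj_pow_mul_exp_neg_sq, mul_ite, mul_zero,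
    sum_ite_eq, if_pos ha]
  ring

lemma berezin2_sum_monomial (N : ℕ) (c : ℕ → ℕ → ℂ) (z : ℂ) :
    berezin2 (fun w => ∑ j ∈ range N, ∑ k ∈ range N, c j k * w ^ j * conj w ^ k) z =
      ∑ j ∈ range N, ∑ k ∈ range N, c j k *
        ∑ a ∈ range (N + 1), j.choose a * k.choose a * a ! * z ^ (j - a) * conj z ^ (k - a) := by
  have hnorm : (2 : ℂ) * ((2 * π)⁻¹ : ℝ) * π = 1 := by
    push_cast
    field_simp
  have hintegrand (ξ : ℂ) :
      (∑ j ∈ range N, ∑ k ∈ range N, c j k * (z + ξ) ^ j * conj (z + ξ) ^ k) *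
        (rexp (-‖ξ‖ ^ 2) : ℂ) = ∑ j ∈ range N, ∑ k ∈ range N,
          c j k * ((z + ξ) ^ j * conj (z + ξ) ^ k * (rexp (-‖ξ‖ ^ 2) : ℂ)) := by
    simp only [sum_mul, mul_assoc]
  have hint (j k : ℕ) :=
    (integrable_add_pow_mul_conj_add_pow_mul_exp_neg_sq j k z).const_mul (c j k)
  rw [berezin2]
  simp_rw [hintegrand]
  rw [integral_finsetSum _ fun j _ => integrable_finsetSum _ fun k _ => hint j k, mul_sum]
  refine sum_congr rfl fun j hj => ?_
  rw [integral_finsetSum _ fun k _ => hint j k, mul_sum]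
  refine sum_congr rfl fun k hk => ?_
  rw [integral_const_mul, integral_add_pow_mul_conj_add_pow_mul_exp_neg_sq
    (mem_range.1 hj).le (mem_range.1 hk).le]
  linear_combination (c j k * ∑ a ∈ range (N + 1),
    j.choose a * k.choose a * a ! * z ^ (j - a) * conj z ^ (k - a)) * hnorm

/- The index `(j, k, a)` stands for the term with `a + 1` pairs `(ξ, ξ̄)` in the expansion of
`c_{jk} B₂(z^j z̄^k)`; the term with none is `c_{jk} z^j z̄^k` itself. -/
def defectExponent (i : ℕ × ℕ × ℕ) : ℕ × ℕ := (i.1 - (i.2.2 + 1), i.2.1 - (i.2.2 + 1))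

def defectCoeff (c : ℕ → ℕ → ℂ) (i : ℕ × ℕ × ℕ) : ℂ :=
  i.1.choose (i.2.2 + 1) * i.2.1.choose (i.2.2 + 1) * (i.2.2 + 1)! * c i.1 i.2.1

lemma berezin2_sum_monomial_sub_self (N : ℕ) (c : ℕ → ℕ → ℂ) (z : ℂ) :
    berezin2 (fun w => ∑ j ∈ range N, ∑ k ∈ range N, c j k * w ^ j * conj w ^ k) z
      - ∑ j ∈ range N, ∑ k ∈ range N, c j k * z ^ j * conj z ^ k =
      ∑ i ∈ range N ×ˢ range N ×ˢ range N,
        defectCoeff c i * z ^ (defectExponent i).1 * conj z ^ (defectExponent i).2 := by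
  rw [berezin2_sum_monomial, sum_product, ← sum_sub_distrib]
  refine sum_congr rfl fun j _ => ?_
  rw [sum_product, ← sum_sub_distrib]
  refine sum_congr rfl fun k _ => ?_
  rw [sum_range_succ', mul_add, mul_sum]
  simp only [Nat.choose_zero_right, Nat.factorial_zero, Nat.cast_one, one_mul, Nat.sub_zero,
    defectCoeff, defectExponent]
  rw [add_sub_assoc, ← mul_assoc, sub_self, add_zero]
  exact sum_congr rfl fun a _ => by ring

namespace MvPolynomial

lemma eval_bind₁ {σ τ R : Type*} [CommSemiring R] (x : τ → R)
    (g : σ → MvPolynomial τ R) (P : MvPolynomial σ R) :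
    eval x (bind₁ g P) = eval (fun i => eval x (g i)) P := by
  rw [eval, eval₂Hom_bind₁]
  rfl

theorem eq_zero_of_forall_eval_conj (P : MvPolynomial (Fin 2) ℂ)
    (h : ∀ z, eval ![z, conj z] P = 0) : P = 0 := by
  set Q : MvPolynomial (Fin 2) ℂ :=
    bind₁ ![X 0 + C Complex.I * X 1, X 0 - C Complex.I * X 1] P
  have heval (x : Fin 2 → ℂ) :
      eval x Q = eval ![x 0 + Complex.I * x 1, x 0 - Complex.I * x 1] P := by
    rw [eval_bind₁]
    congr 2
    funext i
    fin_cases i <;> simp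
  have hQ : Q = 0 := by
    refine funext_set (fun _ => Set.range ((↑) : ℝ → ℂ))
      (fun _ => Set.infinite_range_of_injective Complex.ofReal_injective) fun x hx => ?_
    obtain ⟨u, hu⟩ := hx 0 trivial
    obtain ⟨v, hv⟩ := hx 1 trivial
    rw [heval, map_zero, ← hu, ← hv, ← h (u + v * Complex.I)]
    congr 2
    funext i
    fin_cases i <;> simp [Complex.conj_ofReal] <;> ring
  refine funext fun x => ?_
  have := heval ![(x 0 + x 1) / 2, (x 0 - x 1) / (2 * Complex.I)]
  rw [hQ, map_zero] at this
  rw [map_zero, this]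
  congr 2
  funext i
  fin_cases i <;> simp <;> field_simp <;> ring

end MvPolynomial

open MvPolynomial in
lemma sum_filter_eq_zero_of_forall_sum_mul_pow_mul_conj_pow_eq_zero {ι : Type*} (s : Finset ι)
    (w : ι → ℂ) (e : ι → ℕ × ℕ) (h : ∀ z : ℂ, ∑ i ∈ s, w i * z ^ (e i).1 * conj z ^ (e i).2 = 0)
    (m : ℕ × ℕ) : ∑ i ∈ s with e i = m, w i = 0 := by
  let exponent (m : ℕ × ℕ) : Fin 2 →₀ ℕ := Finsupp.single 0 m.1 + Finsupp.single 1 m.2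
  have exponent_injective : Function.Injective exponent := fun m m' hm =>
    Prod.ext (by simpa [exponent] using congrArg (· 0) hm)
      (by simpa [exponent] using congrArg (· 1) hm)
  have hP := eq_zero_of_forall_eval_conj (∑ i ∈ s, monomial (exponent (e i)) (w i)) fun z => by
    simpa [exponent, eval_monomial, Finsupp.prod_add_index', pow_add, mul_assoc] using h z
  simpa [coeff_sum, coeff_monomial, exponent_injective.eq_iff, sum_filter] using
    congrArg (coeff (exponent m)) hP

lemma mixed_coeff_eq_zero_of_sum_filter_defectCoeff_eq_zero {N : ℕ} {c : ℕ → ℕ → ℂ}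
    (h : ∀ m, ∑ i ∈ range N ×ˢ range N ×ˢ range N with defectExponent i = m, defectCoeff c i = 0)
    {j k : ℕ} (hj₀ : 0 < j) (hk₀ : 0 < k) (hj : j < N) (hk : k < N) : c j k = 0 := by
  induction j using Nat.strong_decreasing_induction generalizing k with
  | base => exact ⟨N, fun j hj k _ _ hjN _ => absurd hjN (by omega)⟩
  | step j ih =>
    -- besides `(j, k, 0)`, only terms `c j' k'` with `j' > j` contribute to `z^(j-1) z̄^(k-1)`
    have hjk := h (j - 1, k - 1)
    rw [sum_eq_single (j, k, 0)] at hjk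
    · simpa [defectCoeff, hj₀.ne', hk₀.ne'] using hjk
    · rintro ⟨j', k', a⟩ hi hne
      simp only [mem_filter, mem_product, mem_range, defectExponent, Prod.mk.injEq] at hi
      simp only [defectCoeff]
      rcases lt_or_ge j' (a + 1) with hja | hja
      · simp [Nat.choose_eq_zero_of_lt hja]
      rcases lt_or_ge k' (a + 1) with hka | hka
      · simp [Nat.choose_eq_zero_of_lt hka]
      have ha : a ≠ 0 := by rintro rfl; apply hne; ext <;> simp <;> omega
      rw [ih j' (by omega) (by omega) (by omega) hi.1.1 hi.1.2.1, mul_zero]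
    · refine fun hnot => absurd (mem_filter.2 ⟨?_, ?_⟩) hnot
      · simp only [mem_product, mem_range]
        omega
      · rfl

open Polynomial in
lemma exists_polynomial_eq_add_of_mixed_coeff_eq_zero {N : ℕ} {c : ℕ → ℕ → ℂ}
    (h : ∀ j k, 0 < j → 0 < k → j < N → k < N → c j k = 0) :
    ∃ p q : ℂ[X], ∀ z w, ∑ j ∈ range N, ∑ k ∈ range N, c j k * z ^ j * w ^ k
      = p.eval z + q.eval w := by
  cases N with
  | zero => exact ⟨0, 0, by simp⟩
  | succ n =>
    refine ⟨∑ j ∈ range n, C (c (j + 1) 0) * X ^ (j + 1),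
      ∑ k ∈ range (n + 1), C (c 0 k) * X ^ k, fun z w => ?_⟩
    simp only [eval_finsetSum, eval_mul, eval_C, eval_pow, eval_X]
    rw [sum_range_succ' _ n]
    simp only [pow_zero, mul_one]
    congr 1
    refine sum_congr rfl fun j hj => ?_
    rw [sum_range_succ']
    simp only [pow_zero, mul_one, add_eq_right]
    exact sum_eq_zero fun k hk => by
      rw [h _ _ j.succ_pos k.succ_pos (by simpa using hj) (by simpa using hk)]
      ring

theorem fixed_points_of_berezin2_are_harmonic (f : ℂ → ℂ)
    (hpoly : ∃ (N : ℕ) (c : ℕ → ℕ → ℂ), ∀ z, f z =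
      ∑ j ∈ Finset.range N, ∑ k ∈ Finset.range N,
        c j k * z ^ j * (starRingEnd ℂ z) ^ k)
    (hfix : ∀ z, berezin2 f z = f z) :
    ∃ p q : Polynomial ℂ, ∀ z, f z = p.eval z + q.eval (starRingEnd ℂ z) := by
  obtain ⟨N, c, hf⟩ := hpoly
  obtain rfl : f = fun w => ∑ j ∈ range N, ∑ k ∈ range N, c j k * w ^ j * conj w ^ k := funext hf
  have hdefect (z : ℂ) : ∑ i ∈ range N ×ˢ range N ×ˢ range N,
      defectCoeff c i * z ^ (defectExponent i).1 * conj z ^ (defectExponent i).2 = 0 := by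
    rw [← berezin2_sum_monomial_sub_self, hfix, sub_self]
  obtain ⟨p, q, hpq⟩ := exists_polynomial_eq_add_of_mixed_coeff_eq_zero fun j k =>
    mixed_coeff_eq_zero_of_sum_filter_defectCoeff_eq_zero
      (sum_filter_eq_zero_of_forall_sum_mul_pow_mul_conj_pow_eq_zero _ _ _ hdefect)
  exact ⟨p, q, fun z => hpq z (conj z)⟩
end

section
/- Let m > 0 and set x = 2/m and d_l = 1/Γ((l+1)x). For integers j ≥ 1 and l ≥ j and τ ≥ 0, one has d_{l+τ} d_l / d_{j+τ+l} − d_{l-j} > 0. -/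
open Real Filter Finset Topology

lemma gamma_mul_gamma_lt {a b c : ℝ} (hc : 0 < c) (hcb : c < b) (hba : b ≤ a) :
    Real.Gamma a * Real.Gamma b < Real.Gamma (a + c) * Real.Gamma (b - c) := by
  have hb : 0 < b := hc.trans hcb
  have ha : 0 < a := lt_of_lt_of_le hb hba
  have hbc : 0 < b - c := by linarith
  have hac : 0 < a + c := by linarith
  set Q : ℕ → ℝ := fun n =>
    ∏ k ∈ Finset.range (n + 1), ((a + c + k) * (b - c + k)) / ((a + k) * (b + k)) with hQ
  have hfac : ∀ k : ℕ, (0:ℝ) < (a + k) * (b + k) := fun k => by positivity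
  have hfac2 : ∀ k : ℕ, (0:ℝ) < (a + c + k) * (b - c + k) := fun k => by positivity
  have hlt : ∀ k : ℕ, (a + c + k) * (b - c + k) < (a + k) * (b + k) := by
    intro k
    have hk : (0:ℝ) ≤ (k:ℝ) := Nat.cast_nonneg k
    nlinarith
  have hr1 : ∀ k : ℕ, ((a + c + k) * (b - c + k)) / ((a + k) * (b + k)) ≤ 1 := fun k =>
    (div_le_one (hfac k)).mpr (hlt k).le
  have hr0 : ∀ k : ℕ, (0:ℝ) ≤ ((a + c + k) * (b - c + k)) / ((a + k) * (b + k)) := fun k =>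
    le_of_lt (div_pos (hfac2 k) (hfac k))
  have hQle : ∀ n : ℕ, Q n ≤ ((a + c) * (b - c)) / (a * b) := by
    intro n
    have := Finset.prod_range_succ'
      (fun k : ℕ => ((a + c + k) * (b - c + k)) / ((a + k) * (b + k))) n
    rw [hQ]
    simp only
    rw [this]
    have h1 : (∏ k ∈ Finset.range n,
        ((a + c + (k+1:ℕ)) * (b - c + (k+1:ℕ))) / ((a + (k+1:ℕ)) * (b + (k+1:ℕ)))) ≤ 1 :=
      Finset.prod_le_one (fun k _ => hr0 _) (fun k _ => hr1 _)
    have h2 : ((a + c + (0:ℕ)) * (b - c + (0:ℕ))) / ((a + (0:ℕ)) * (b + (0:ℕ))) =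
        ((a + c) * (b - c)) / (a * b) := by norm_num
    calc (∏ k ∈ Finset.range n,
          ((a + c + (k+1:ℕ)) * (b - c + (k+1:ℕ))) / ((a + (k+1:ℕ)) * (b + (k+1:ℕ)))) *
          (((a + c + (0:ℕ)) * (b - c + (0:ℕ))) / ((a + (0:ℕ)) * (b + (0:ℕ))))
        ≤ 1 * (((a + c + (0:ℕ)) * (b - c + (0:ℕ))) / ((a + (0:ℕ)) * (b + (0:ℕ)))) := by
          apply mul_le_mul_of_nonneg_right h1 (hr0 0)
      _ = ((a + c) * (b - c)) / (a * b) := by rw [one_mul, h2]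
  -- prods nonzero
  have hprodpos : ∀ (s : ℝ), 0 < s → ∀ n : ℕ,
      (0:ℝ) < ∏ k ∈ Finset.range (n + 1), (s + k) := by
    intro s hs n
    exact Finset.prod_pos fun k _ => by positivity
  have hEq : ∀ᶠ n in atTop, Real.GammaSeq a n * Real.GammaSeq b n /
      (Real.GammaSeq (a + c) n * Real.GammaSeq (b - c) n) = Q n := by
    filter_upwards [eventually_ge_atTop 1] with n hn
    have hn0 : (0:ℝ) < (n:ℝ) := by exact_mod_cast hn
    have hQn : Q n = (∏ k ∈ Finset.range (n+1), (a + c + k)) *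
        (∏ k ∈ Finset.range (n+1), (b - c + k)) /
        ((∏ k ∈ Finset.range (n+1), (a + k)) * (∏ k ∈ Finset.range (n+1), (b + k))) := by
      rw [hQ]
      simp only
      rw [Finset.prod_div_distrib, Finset.prod_mul_distrib, Finset.prod_mul_distrib]
    rw [hQn]
    simp only [Real.GammaSeq]
    have hPa := (hprodpos a ha n).ne'
    have hPb := (hprodpos b hb n).ne'
    have hPac := (hprodpos (a + c) hac n).ne'
    have hPbc := (hprodpos (b - c) hbc n).ne'
    have hfne : (Nat.factorial n : ℝ) ≠ 0 := by
      exact_mod_cast (Nat.factorial_pos n).ne'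
    have hab : (n:ℝ) ^ a * (n:ℝ) ^ b = (n:ℝ) ^ (a + c) * (n:ℝ) ^ (b - c) := by
      rw [← Real.rpow_add hn0, ← Real.rpow_add hn0]
      ring_nf
    calc (n:ℝ) ^ a * (Nat.factorial n : ℝ) / (∏ k ∈ Finset.range (n+1), (a + k)) *
          ((n:ℝ) ^ b * (Nat.factorial n : ℝ) / (∏ k ∈ Finset.range (n+1), (b + k))) /
          ((n:ℝ) ^ (a + c) * (Nat.factorial n : ℝ) / (∏ k ∈ Finset.range (n+1), (a + c + k)) *
          ((n:ℝ) ^ (b - c) * (Nat.factorial n : ℝ) / (∏ k ∈ Finset.range (n+1), (b - c + k))))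
        = ((n:ℝ) ^ a * (n:ℝ) ^ b) / ((n:ℝ) ^ (a + c) * (n:ℝ) ^ (b - c)) *
          ((∏ k ∈ Finset.range (n+1), (a + c + k)) * (∏ k ∈ Finset.range (n+1), (b - c + k)) /
          ((∏ k ∈ Finset.range (n+1), (a + k)) * (∏ k ∈ Finset.range (n+1), (b + k)))) := by
          field_simp
      _ = (∏ k ∈ Finset.range (n+1), (a + c + k)) * (∏ k ∈ Finset.range (n+1), (b - c + k)) /
          ((∏ k ∈ Finset.range (n+1), (a + k)) * (∏ k ∈ Finset.range (n+1), (b + k))) := by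
          rw [hab, div_self (by positivity), one_mul]
  have hT : Tendsto (fun n => Real.GammaSeq a n * Real.GammaSeq b n /
      (Real.GammaSeq (a + c) n * Real.GammaSeq (b - c) n)) atTop
      (𝓝 (Real.Gamma a * Real.Gamma b / (Real.Gamma (a + c) * Real.Gamma (b - c)))) := by
    exact ((Real.GammaSeq_tendsto_Gamma a).mul (Real.GammaSeq_tendsto_Gamma b)).div
      ((Real.GammaSeq_tendsto_Gamma (a+c)).mul (Real.GammaSeq_tendsto_Gamma (b-c)))
      (by positivity)
  have hTQ : Tendsto Q atTop
      (𝓝 (Real.Gamma a * Real.Gamma b / (Real.Gamma (a + c) * Real.Gamma (b - c)))) :=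
    hT.congr' hEq
  have hL : Real.Gamma a * Real.Gamma b / (Real.Gamma (a + c) * Real.Gamma (b - c)) ≤
      ((a + c) * (b - c)) / (a * b) :=
    le_of_tendsto hTQ (Eventually.of_forall hQle)
  have hr0lt1 : ((a + c) * (b - c)) / (a * b) < 1 := by
    rw [div_lt_one (by positivity)]
    nlinarith
  have : Real.Gamma a * Real.Gamma b / (Real.Gamma (a + c) * Real.Gamma (b - c)) < 1 :=
    lt_of_le_of_lt hL hr0lt1
  have hpos : 0 < Real.Gamma (a + c) * Real.Gamma (b - c) := by
    have := Real.Gamma_pos_of_pos hac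
    have := Real.Gamma_pos_of_pos hbc
    positivity
  exact (div_lt_one hpos).mp this

theorem dcoef_difference_pos (m : ℝ) (hm : 0 < m) (j l τ : ℕ)
    (hj : 1 ≤ j) (hl : j ≤ l) :
    (fun i : ℕ => 1 / Real.Gamma (((i : ℝ) + 1) * (2 / m))) (l + τ) *
        (fun i : ℕ => 1 / Real.Gamma (((i : ℝ) + 1) * (2 / m))) l /
        (fun i : ℕ => 1 / Real.Gamma (((i : ℝ) + 1) * (2 / m))) (j + τ + l) -
      (fun i : ℕ => 1 / Real.Gamma (((i : ℝ) + 1) * (2 / m))) (l - j) > 0 := by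
  have hx : (0:ℝ) < 2 / m := by positivity
  set x : ℝ := 2 / m with hxdef
  set a : ℝ := ((l:ℝ) + (τ:ℝ) + 1) * x with hadef
  set b : ℝ := ((l:ℝ) + 1) * x with hbdef
  set c : ℝ := (j:ℝ) * x with hcdef
  have hjr : (1:ℝ) ≤ (j:ℝ) := by exact_mod_cast hj
  have hlr : (j:ℝ) ≤ (l:ℝ) := by exact_mod_cast hl
  have hc : 0 < c := by
    have : (0:ℝ) < (j:ℝ) := by linarith
    positivity
  have hcb : c < b := by
    rw [hcdef, hbdef]
    have : (j:ℝ) < (l:ℝ) + 1 := by linarith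
    exact mul_lt_mul_of_pos_right this hx
  have hba : b ≤ a := by
    rw [hbdef, hadef]
    have : (l:ℝ) + 1 ≤ (l:ℝ) + (τ:ℝ) + 1 := by
      have : (0:ℝ) ≤ (τ:ℝ) := Nat.cast_nonneg τ
      linarith
    exact mul_le_mul_of_nonneg_right this hx.le
  have key := gamma_mul_gamma_lt hc hcb hba
  -- identify the four arguments
  have e1 : (((l + τ : ℕ):ℝ) + 1) * x = a := by push_cast [hadef]; ring
  have e2 : (((l:ℕ):ℝ) + 1) * x = b := by rw [hbdef]
  have e3 : (((j + τ + l : ℕ):ℝ) + 1) * x = a + c := by push_cast [hadef, hcdef]; ring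
  have e4 : (((l - j : ℕ):ℝ) + 1) * x = b - c := by
    have : ((l - j : ℕ):ℝ) = (l:ℝ) - (j:ℝ) := by
      rw [Nat.cast_sub hl]
    rw [this, hbdef, hcdef]; ring
  simp only [e1, e2, e3, e4]
  have hb : 0 < b := hc.trans hcb
  have ha : 0 < a := lt_of_lt_of_le hb hba
  have hbc : 0 < b - c := by linarith
  have hac : 0 < a + c := by linarith
  have hGa := Real.Gamma_pos_of_pos ha
  have hGb := Real.Gamma_pos_of_pos hb
  have hGac := Real.Gamma_pos_of_pos hac
  have hGbc := Real.Gamma_pos_of_pos hbc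
  rw [gt_iff_lt, sub_pos]
  have h1 : 1 / Real.Gamma a * (1 / Real.Gamma b) / (1 / Real.Gamma (a + c)) =
      Real.Gamma (a + c) / (Real.Gamma a * Real.Gamma b) := by
    field_simp
  rw [h1, div_lt_div_iff₀ hGbc (by positivity), one_mul]
  exact key
end
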